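/- arXiv:2109.09137 — 5 statements merged into one kernel-verified Lean document; each statement's English description precedes it below -/
import Mathlib

section
/- Suppose f : [0,∞) → ℝ is Lipschitz with constant ϱ − δ for some 0 < δ < ϱ and f(0) = 0. If φ ∈ C²(ℝ₊) satisfies φ'(x) = 1 and φ''(x) + (2/σ²)(m − (1/2)σ²κ − ϱφ(x) + f(x)) = 0 with φ''(x) = 0 at x = β, then for every x > β the function ψ(x) := φ(β) + (x − β) satisfies (2/σ²)(m − (1/2)σ²κ − ϱψ(x) + f(x)) ≤ 0. -/
/-- Suppose f is Lipschitz with constant ϱ − δ (0 < δ < ϱ) and f(0) = 0. If φ is C²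
at β with φ'(β) = 1, φ''(β) + (2/σ²)(m − (1/2)σ²κ − ϱφ(β) + f(β)) = 0, and
φ''(β) = 0, then for every x > β the function ψ(x) := φ(β) + (x − β) satisfies
(2/σ²)(m − (1/2)σ²κ − ϱψ(x) + f(x)) ≤ 0. -/
theorem stmt_3 (m σ ϱ κ δ β : ℝ) (hσ : 0 < σ) (hm : 0 < m) (hϱ : 0 < ϱ)
    (hκ : 0 ≤ κ) (hδ0 : 0 < δ) (hδϱ : δ < ϱ) (hβ : 0 ≤ β)
    (f : ℝ → ℝ) (hf : ∀ x y, x ∈ Set.Ici (0:ℝ) → y ∈ Set.Ici (0:ℝ) →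
      |f x - f y| ≤ (ϱ - δ) * |x - y|)
    (hf0 : f 0 = 0)
    (φ φ' φ'' : ℝ → ℝ)
    (hφ'β : φ' β = 1)
    (hODE : φ'' β + (2 / σ^2) * (m - (1/2) * σ^2 * κ - ϱ * φ β + f β) = 0)
    (hφ''β : φ'' β = 0) :
    ∀ x > β, (2 / σ^2) * (m - (1/2) * σ^2 * κ - ϱ * (φ β + (x - β)) + f x) ≤ 0 := by
  intro x hx
  have hσ2 : (0:ℝ) < 2 / σ^2 := by positivity
  have hzero : m - (1/2) * σ^2 * κ - ϱ * φ β + f β = 0 := by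
    rw [hφ''β, zero_add] at hODE
    exact (mul_eq_zero.1 hODE).resolve_left (ne_of_gt hσ2)
  have hfx : f x - f β ≤ (ϱ - δ) * (x - β) := by
    have := hf x β (le_trans hβ hx.le) hβ
    calc f x - f β ≤ |f x - f β| := le_abs_self _
      _ ≤ (ϱ - δ) * |x - β| := this
      _ = (ϱ - δ) * (x - β) := by rw [abs_of_pos (by linarith)]
  have key : m - (1/2) * σ^2 * κ - ϱ * (φ β + (x - β)) + f x ≤ 0 := by nlinarith
  exact mul_nonpos_of_nonneg_of_nonpos hσ2.le key
end

section
/- Let φ ∈ C²([0,β]) satisfy the ODE φ''(x) = κ(φ'(x))² − (2m/σ²)φ'(x) + (2/σ²)(ϱφ(x) − f(x)) on [0,β], with φ'(x) ≥ 1 for all x ∈ [0,β], φ'(β) = 1, and φ''(β) = 0. If f is Lipschitz with constant ϱ − δ (0 < δ < ϱ), f(0) = 0, φ(0) = 0, and κ ≤ 2m/σ², then β ≤ (2m − σ²κ)/(2δ) ≤ m/δ. -/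
/-- Let φ be C² on [0,β] satisfying
φ''(x) = κ(φ'(x))² − (2m/σ²)φ'(x) + (2/σ²)(ϱφ(x) − f(x)) on [0,β],
with φ' ≥ 1 on [0,β], φ'(β) = 1, φ''(β) = 0, f Lipschitz with constant ϱ − δ,
f(0) = 0, φ(0) = 0, and κ ≤ 2m/σ².  Then β ≤ (2m − σ²κ)/(2δ) ≤ m/δ. -/
theorem stmt_4 (m σ ϱ δ κ β : ℝ) (hσ : 0 < σ) (hm : 0 < m) (hϱ : 0 < ϱ)
    (hδ0 : 0 < δ) (hδϱ : δ < ϱ) (hκ0 : 0 ≤ κ) (hκ : κ ≤ 2 * m / σ^2) (hβ : 0 ≤ β)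
    (f : ℝ → ℝ) (hf : ∀ x y, x ∈ Set.Ici (0:ℝ) → y ∈ Set.Ici (0:ℝ) →
      |f x - f y| ≤ (ϱ - δ) * |x - y|)
    (hf0 : f 0 = 0)
    (φ φ' φ'' : ℝ → ℝ)
    (hd1 : ∀ x ∈ Set.Icc (0:ℝ) β, HasDerivAt φ (φ' x) x)
    (hd2 : ∀ x ∈ Set.Icc (0:ℝ) β, HasDerivAt φ' (φ'' x) x)
    (hODE : ∀ x ∈ Set.Icc (0:ℝ) β,
      φ'' x = κ * (φ' x)^2 - (2 * m / σ^2) * φ' x + (2 / σ^2) * (ϱ * φ x - f x))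
    (hφ'ge : ∀ x ∈ Set.Icc (0:ℝ) β, 1 ≤ φ' x)
    (hφ'β : φ' β = 1) (hφ''β : φ'' β = 0) (hφ0 : φ 0 = 0) :
    β ≤ (2 * m - σ^2 * κ) / (2 * δ) ∧ (2 * m - σ^2 * κ) / (2 * δ) ≤ m / δ := by

  have hβmem : β ∈ Set.Icc (0:ℝ) β := ⟨hβ, le_refl β⟩
  -- φ β ≥ β
  have hφβ : β ≤ φ β := by
    have hconv : Convex ℝ (Set.Icc (0:ℝ) β) := convex_Icc 0 β
    have hcont : ContinuousOn φ (Set.Icc (0:ℝ) β) := fun x hx =>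
      (hd1 x hx).continuousAt.continuousWithinAt
    have hdiff : DifferentiableOn ℝ φ (interior (Set.Icc (0:ℝ) β)) := fun x hx =>
      ((hd1 x (interior_subset hx)).differentiableAt).differentiableWithinAt
    have hge : ∀ x ∈ interior (Set.Icc (0:ℝ) β), 1 ≤ deriv φ x := by
      intro x hx
      rw [(hd1 x (interior_subset hx)).deriv]
      exact hφ'ge x (interior_subset hx)
    have := hconv.mul_sub_le_image_sub_of_le_deriv hcont hdiff hge 0 ⟨le_refl 0, hβ⟩ β hβmem hβ
    simpa [hφ0] using this
  -- f β ≤ (ϱ - δ) * β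
  have hfβ : f β ≤ (ϱ - δ) * β := by
    have := hf β 0 (Set.mem_Ici.mpr hβ) Set.self_mem_Ici
    rw [hf0, sub_zero, sub_zero, abs_of_nonneg hβ] at this
    exact (abs_le.mp this).2
  have hODEβ := hODE β hβmem
  rw [hφ''β, hφ'β] at hODEβ
  have hσ2 : (0:ℝ) < σ^2 := by positivity
  have key : δ * β ≤ m - σ^2 * κ / 2 := by
    have h1 : ϱ * β ≤ ϱ * φ β := by nlinarith
    have h2 : ϱ * φ β - f β = m - σ^2 * κ / 2 := by
      field_simp at hODEβ
      nlinarith [hODEβ, hσ2]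
    nlinarith [h1, hfβ, h2]
  constructor
  · rw [le_div_iff₀ (by linarith : (0:ℝ) < 2 * δ)]
    nlinarith [key]
  · rw [div_le_div_iff₀ (by linarith : (0:ℝ) < 2 * δ) hδ0]
    nlinarith [mul_nonneg (mul_nonneg (sq_nonneg σ) hκ0) hδ0.le]
end

section
/- Continuing the previous setting: for any s ≥ 1, δ ∈ ℝ, and u ≥ 0, sup_{x∈[0,u]} |φ^(s+δ)(x) − φ^(s)(x)| ≤ |δ| u [1 + Lu(1+u)·exp(Lu(1+u/2))], and sup_{x∈[0,u]} |(φ^(s+δ))''(x) − (φ^(s))''(x)| ≤ L(sup_{x∈[0,u]} |φ^(s+δ)(x) − φ^(s)(x)| + sup_{x∈[0,u]} |(φ^(s+δ))'(x) − (φ^(s))'(x)|). -/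
/-!
The difference `w = φ^(s+δ) - φ^(s)` satisfies `w 0 = 0`, `w' 0 = δ` and, by the Lipschitz bound
on `H`, `|w''| ≤ L (|w| + |w'|)`. With `h = ∫₀ˣ |w'|` and `P = |δ| + L ∫₀ˣ (h + |w'|)`, comparing
derivatives gives `|w| ≤ h`, `|w'| ≤ P` and `h ≤ x P`, hence `P' ≤ L (1 + x) P`, and Grönwall
yields `|w x| ≤ x |δ| exp (L (x + x²/2))`. The stated form follows from `exp B ≤ 1 + B exp B`.
-/

open Set Real

lemma le_of_hasDerivAt_le {f f' g g' : ℝ → ℝ} {a : ℝ}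
    (hf : ∀ x ∈ Ici a, HasDerivAt f (f' x) x) (hg : ∀ x ∈ Ici a, HasDerivAt g (g' x) x)
    (ha : f a ≤ g a) (hle : ∀ x ∈ Ici a, f' x ≤ g' x) : ∀ x ∈ Ici a, f x ≤ g x :=
  fun _ hx => image_le_of_deriv_right_le_deriv_boundary
    (fun y hy => (hf y hy.1).continuousAt.continuousWithinAt)
    (fun y hy => (hf y hy.1).hasDerivWithinAt) ha
    (fun y hy => (hg y hy.1).continuousAt.continuousWithinAt)
    (fun y hy => (hg y hy.1).hasDerivWithinAt) (fun y hy => hle y hy.1) ⟨hx, le_rfl⟩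

lemma abs_le_of_hasDerivAt_abs_le {f f' g g' : ℝ → ℝ} {a : ℝ}
    (hf : ∀ x ∈ Ici a, HasDerivAt f (f' x) x) (hg : ∀ x ∈ Ici a, HasDerivAt g (g' x) x)
    (ha : |f a| ≤ g a) (hle : ∀ x ∈ Ici a, |f' x| ≤ g' x) : ∀ x ∈ Ici a, |f x| ≤ g x := by
  intro x hx
  rw [abs_le] at ha ⊢
  refine ⟨?_, le_of_hasDerivAt_le hf hg ha.2 (fun y hy => (abs_le.mp (hle y hy)).2) x hx⟩
  have := le_of_hasDerivAt_le (fun y hy => (hg y hy).neg) hf ha.1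
    (fun y hy => (abs_le.mp (hle y hy)).1) x hx
  simpa using this

lemma le_mul_exp_sub_of_hasDerivAt_le_mul {P P' K k : ℝ → ℝ} {a : ℝ}
    (hP : ∀ x ∈ Ici a, HasDerivAt P (P' x) x) (hK : ∀ x ∈ Ici a, HasDerivAt K (k x) x)
    (hle : ∀ x ∈ Ici a, P' x ≤ k x * P x) : ∀ x ∈ Ici a, P x ≤ P a * exp (K x - K a) := by
  intro x hx
  have hR := le_of_hasDerivAt_le (f := fun y => P y * exp (-K y)) (g := fun _ => P a * exp (-K a))
    (fun y hy => (hP y hy).mul (hK y hy).neg.exp) (fun y _ => hasDerivAt_const y _) le_rfl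
    (fun y hy => by
      show P' y * exp (-K y) + P y * (exp (-K y) * -k y) ≤ 0
      nlinarith [mul_le_mul_of_nonneg_right (hle y hy) (exp_pos (-K y)).le]) x hx
  calc P x = P x * exp (-K x) * exp (K x) := by rw [mul_assoc, ← exp_add]; simp
    _ ≤ P a * exp (-K a) * exp (K x) := by gcongr
    _ = P a * exp (K x - K a) := by rw [mul_assoc, ← exp_add]; ring_nf

lemma exp_le_one_add_mul_exp (B : ℝ) : exp B ≤ 1 + B * exp B := by
  have h := mul_le_mul_of_nonneg_left (one_sub_le_exp_neg B) (exp_pos B).le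
  rw [← exp_add, add_neg_cancel, exp_zero] at h
  linarith

lemma mul_mul_exp_le {c L x u : ℝ} (hc : 0 ≤ c) (hL : 0 ≤ L) (hx : 0 ≤ x) (hxu : x ≤ u) :
    x * (c * exp (L * (x + x ^ 2 / 2)))
      ≤ c * u * (1 + L * u * (1 + u) * exp (L * u * (1 + u / 2))) := by
  have hu : 0 ≤ u := hx.trans hxu
  have hB : L * u * (1 + u / 2) ≤ L * u * (1 + u) := by gcongr; linarith
  calc x * (c * exp (L * (x + x ^ 2 / 2))) ≤ u * (c * exp (L * (u + u ^ 2 / 2))) := by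
        gcongr
    _ = c * u * exp (L * u * (1 + u / 2)) := by ring_nf
    _ ≤ c * u * (1 + L * u * (1 + u) * exp (L * u * (1 + u / 2))) := by
        gcongr
        exact (exp_le_one_add_mul_exp _).trans (by gcongr)

lemma csSup_image_le_mul_add {α : Type*} {s : Set α} {f g k : α → ℝ} {c : ℝ}
    (hs : s.Nonempty) (hf : BddAbove (f '' s)) (hg : BddAbove (g '' s)) (hc : 0 ≤ c)
    (hk : ∀ x ∈ s, k x ≤ c * (f x + g x)) :
    sSup (k '' s) ≤ c * (sSup (f '' s) + sSup (g '' s)) :=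
  csSup_le (hs.image k) <| forall_mem_image.mpr fun x hx => (hk x hx).trans <|
    mul_le_mul_of_nonneg_left (add_le_add (le_csSup hf (mem_image_of_mem f hx))
      (le_csSup hg (mem_image_of_mem g hx))) hc

lemma abs_le_mul_exp_of_abs_deriv2_le {f f' f'' : ℝ → ℝ} {L : ℝ} (hL : 0 ≤ L)
    (hf : ∀ x ∈ Ici 0, HasDerivAt f (f' x) x) (hf' : ∀ x ∈ Ici 0, HasDerivAt f' (f'' x) x)
    (hf'' : ∀ x ∈ Ici 0, |f'' x| ≤ L * (|f x| + |f' x|)) (hf0 : f 0 = 0) :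
    ∀ x ∈ Ici 0, |f x| ≤ x * (|f' 0| * exp (L * (x + x ^ 2 / 2))) := by
  -- `g` is `|f'|` extended continuously to `x < 0`, so that its primitives are differentiable.
  set g : ℝ → ℝ := fun x => |f' (max x 0)|
  have hg : Continuous g := (ContinuousOn.comp_continuous
    (fun x hx => (hf' x hx).continuousAt.continuousWithinAt)
    (continuous_id.max continuous_const) (fun x => le_max_right x 0)).abs
  have hg_eq : ∀ x ∈ Ici (0 : ℝ), g x = |f' x| := fun x hx => by
    simp only [g, max_eq_left (mem_Ici.mp hx)]
  set h : ℝ → ℝ := fun x => ∫ t in (0 : ℝ)..x, g t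
  have hh : ∀ x, HasDerivAt h (g x) x := fun x => (hg.integral_hasStrictDerivAt 0 x).hasDerivAt
  set P : ℝ → ℝ := fun x => |f' 0| + L * ∫ t in (0 : ℝ)..x, (h t + g t)
  have hP : ∀ x, HasDerivAt P (L * (h x + g x)) x := fun x =>
    ((((continuous_iff_continuousAt.mpr fun y => (hh y).continuousAt).add hg)
      |>.integral_hasStrictDerivAt 0 x).hasDerivAt.const_mul L).const_add _
  have hf_le : ∀ x ∈ Ici 0, |f x| ≤ h x :=
    abs_le_of_hasDerivAt_abs_le hf (fun x _ => hh x) (by simp [h, hf0])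
      (fun x hx => (hg_eq x hx).ge)
  have hf'_le : ∀ x ∈ Ici 0, |f' x| ≤ P x :=
    abs_le_of_hasDerivAt_abs_le hf' (fun x _ => hP x) (by simp [P])
      (fun x hx => (hf'' x hx).trans (by rw [← hg_eq x hx]; gcongr; exact hf_le x hx))
  have hh_le : ∀ x ∈ Ici 0, h x ≤ x * P x :=
    le_of_hasDerivAt_le (fun x _ => hh x) (fun x _ => (hasDerivAt_id x).mul (hP x))
      (by simp [h]) fun x hx => by
        have hx : 0 ≤ x := hx
        have hh_nonneg : 0 ≤ h x := (abs_nonneg _).trans (hf_le x hx)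
        have hg_nonneg : 0 ≤ g x := abs_nonneg _
        have : 0 ≤ x * (L * (h x + g x)) := by positivity
        simp only [id, one_mul]
        linarith [hg_eq x hx, hf'_le x hx]
  have hP_le : ∀ x ∈ Ici 0, P x ≤ |f' 0| * exp (L * (x + x ^ 2 / 2)) := by
    intro x hx
    have hK : ∀ y ∈ Ici (0 : ℝ), HasDerivAt (fun y => L * (y + y ^ 2 / 2)) (L * (1 + y)) y :=
      fun y _ => by
        simpa using (((hasDerivAt_id y).add ((hasDerivAt_pow 2 y).div_const 2)).const_mul L)
    have := le_mul_exp_sub_of_hasDerivAt_le_mul (fun y _ => hP y) hK (fun y hy => calc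
      L * (h y + g y) ≤ L * (y * P y + P y) := by
        gcongr; exacts [hh_le y hy, (hg_eq y hy).trans_le (hf'_le y hy)]
      _ = L * (1 + y) * P y := by ring) x hx
    simpa [P] using this
  intro x hx
  calc |f x| ≤ h x := hf_le x hx
    _ ≤ x * P x := hh_le x hx
    _ ≤ x * (|f' 0| * exp (L * (x + x ^ 2 / 2))) :=
        mul_le_mul_of_nonneg_left (hP_le x hx) hx

/-- Continuing the setting of the Lipschitz Cauchy problem: for any s ≥ 1, δ, and
u ≥ 0, sup_{x∈[0,u]} |φ^(s+δ)(x) − φ^(s)(x)| ≤ |δ| u [1 + Lu(1+u)·exp(Lu(1+u/2))],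
and sup_{x∈[0,u]} |(φ^(s+δ))''(x) − (φ^(s))''(x)| ≤
L(sup_{x∈[0,u]} |φ^(s+δ)(x) − φ^(s)(x)| + sup_{x∈[0,u]} |(φ^(s+δ))'(x) − (φ^(s))'(x)|). -/
theorem stmt_10 (L : ℝ) (hL : 0 < L)
    (H : ℝ → ℝ → ℝ → ℝ)
    (hH : ∀ x x' : ℝ, x ∈ Set.Ici (0:ℝ) → x' ∈ Set.Ici (0:ℝ) → ∀ y y' z z' : ℝ,
      |H x y z - H x' y' z'| ≤ L * (|x - x'| + |y - y'| + |z - z'|))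
    (φ φ' φ'' : ℝ → ℝ → ℝ)
    (hd1 : ∀ s ≥ (1:ℝ), ∀ x ∈ Set.Ici (0:ℝ), HasDerivAt (φ s) (φ' s x) x)
    (hd2 : ∀ s ≥ (1:ℝ), ∀ x ∈ Set.Ici (0:ℝ), HasDerivAt (φ' s) (φ'' s x) x)
    (hODE : ∀ s ≥ (1:ℝ), ∀ x ∈ Set.Ici (0:ℝ),
      φ'' s x + H x (φ s x) (φ' s x) = 0)
    (hinit0 : ∀ s ≥ (1:ℝ), φ s 0 = 0)
    (hinit1 : ∀ s ≥ (1:ℝ), φ' s 0 = s) :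
    ∀ s ≥ (1:ℝ), ∀ δ : ℝ, 1 ≤ s + δ → ∀ u ≥ (0:ℝ),
      (∀ x ∈ Set.Icc (0:ℝ) u,
        |φ (s + δ) x - φ s x|
          ≤ |δ| * u * (1 + L * u * (1 + u) * Real.exp (L * u * (1 + u / 2)))) ∧
      (sSup ((fun x => |φ'' (s + δ) x - φ'' s x|) '' Set.Icc (0:ℝ) u)
        ≤ L * (sSup ((fun x => |φ (s + δ) x - φ s x|) '' Set.Icc (0:ℝ) u)
             + sSup ((fun x => |φ' (s + δ) x - φ' s x|) '' Set.Icc (0:ℝ) u))) := by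
  intro s hs δ hδ u hu
  set w : ℝ → ℝ := fun x => φ (s + δ) x - φ s x
  set w' : ℝ → ℝ := fun x => φ' (s + δ) x - φ' s x
  have hw : ∀ x ∈ Ici 0, HasDerivAt w (w' x) x := fun x hx =>
    (hd1 _ hδ x hx).sub (hd1 s hs x hx)
  have hw' : ∀ x ∈ Ici 0, HasDerivAt w' (φ'' (s + δ) x - φ'' s x) x := fun x hx =>
    (hd2 _ hδ x hx).sub (hd2 s hs x hx)
  have hw'' : ∀ x ∈ Ici 0, |φ'' (s + δ) x - φ'' s x| ≤ L * (|w x| + |w' x|) := fun x hx => by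
    have := hH x x hx hx (φ s x) (φ (s + δ) x) (φ' s x) (φ' (s + δ) x)
    rw [sub_self, abs_zero, zero_add, abs_sub_comm (φ s x), abs_sub_comm (φ' s x)] at this
    rwa [show φ'' (s + δ) x - φ'' s x = H x (φ s x) (φ' s x) - H x (φ (s + δ) x) (φ' (s + δ) x)
      by linarith [hODE _ hδ x hx, hODE s hs x hx]]
  have hw0 : w 0 = 0 := by simp [w, hinit0 _ hδ, hinit0 s hs]
  have hw'0 : |w' 0| = |δ| := by simp [w', hinit1 _ hδ, hinit1 s hs]
  have hw_le := abs_le_mul_exp_of_abs_deriv2_le hL.le hw hw' hw'' hw0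
  refine ⟨fun x hx => ?_, ?_⟩
  · exact (hw_le x hx.1).trans (hw'0 ▸ mul_mul_exp_le (abs_nonneg _) hL.le hx.1 hx.2)
  · have hbdd : ∀ {v v' : ℝ → ℝ}, (∀ x ∈ Ici 0, HasDerivAt v (v' x) x) →
        BddAbove ((fun x => |v x|) '' Icc 0 u) := fun hv =>
      isCompact_Icc.bddAbove_image fun x hx => (hv x hx.1).continuousAt.continuousWithinAt.abs
    exact csSup_image_le_mul_add (nonempty_Icc.2 hu) (hbdd hw) (hbdd hw') hL.le
      fun x hx => hw'' x hx.1
end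

section
/- Fix constants m, σ > 0, ϱ > 0 and let Ψ, φ ∈ C²([0,T]) satisfy Ψ'' (x) = (2m/σ²)(Ψ'(x))² + (2ϱ/σ²)Ψ(x), Ψ(0) = 0, Ψ'(0) = s̃, and φ''(x) < (2m/σ²)(φ'(x))² + (2ϱ/σ²)φ(x), φ(0) = 0, φ'(0) = s with s < s̃. Then φ'(x) ≤ Ψ'(x) for all x ∈ [0,T]. -/
/-!
Let `g = φ' - Ψ'`, negative at `0`. If `g` ever became nonnegative, take its first zero `c`.
On `[0, c]` we have `(φ - Ψ)' = g ≤ 0`, so `φ c ≤ Ψ c`; since `φ' c = Ψ' c` and the right-hand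
side `F p y = (2m/σ²) p² + (2ϱ/σ²) y` is monotone in `y`, this gives `φ'' c < Ψ'' c`, i.e.
`g' c < 0`. But `g` reaches the value `0` at `c` from below, so `g' c ≥ 0`.
-/

open Set Filter Topology

lemma HasDerivAt.nonneg_of_eventually_le_left {g : ℝ → ℝ} {g' c : ℝ} (hd : HasDerivAt g g' c)
    (hle : ∀ᶠ y in 𝓝[<] c, g y ≤ g c) : 0 ≤ g' := by
  refine ge_of_tendsto (hasDerivAt_iff_tendsto_slope_left_right.mp hd).1 ?_
  filter_upwards [hle, self_mem_nhdsWithin] with y hy hyc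
  rw [slope_def_field]
  exact div_nonneg_of_nonpos (sub_nonpos.2 hy) (sub_nonpos.2 (le_of_lt hyc))

lemma exists_first_zero_of_neg_of_nonneg {g : ℝ → ℝ} {a b : ℝ} (hab : a ≤ b)
    (hg : ContinuousOn g (Icc a b)) (ha : g a < 0) (hb : 0 ≤ g b) :
    ∃ c ∈ Ioc a b, g c = 0 ∧ ∀ y ∈ Ico a c, g y < 0 := by
  set A := Icc a b ∩ g ⁻¹' Ici 0
  have hA : IsClosed A := hg.preimage_isClosed_of_isClosed isClosed_Icc isClosed_Ici
  have hAbdd : BddBelow A := ⟨a, fun y hy => hy.1.1⟩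
  obtain ⟨c, ⟨⟨hac, hcb⟩, hgc⟩, hmin⟩ : ∃ c ∈ A, ∀ y ∈ A, c ≤ y :=
    ⟨sInf A, hA.csInf_mem ⟨b, ⟨hab, le_rfl⟩, hb⟩ hAbdd, fun y hy => csInf_le hAbdd hy⟩
  obtain ⟨y, hy, hgy⟩ : ∃ y ∈ Icc a c, g y = 0 :=
    intermediate_value_Icc hac (hg.mono (Icc_subset_Icc_right hcb)) ⟨ha.le, hgc⟩
  obtain rfl : c = y := le_antisymm (hmin y ⟨⟨hy.1, hy.2.trans hcb⟩, hgy.ge⟩) hy.2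
  refine ⟨c, ⟨hac.lt_of_ne ?_, hcb⟩, hgy, fun z hz => ?_⟩
  · rintro rfl
    exact ha.ne hgy
  · by_contra! hgz
    exact (hmin z ⟨⟨hz.1, hz.2.le.trans hcb⟩, hgz⟩).not_gt hz.2

theorem deriv_lt_of_strict_subsolution {F : ℝ → ℝ → ℝ} (hF : ∀ p, Monotone (F p)) {a b : ℝ}
    {Ψ Ψ' Ψ'' φ φ' φ'' : ℝ → ℝ}
    (hΨ : ∀ x ∈ Icc a b, HasDerivAt Ψ (Ψ' x) x) (hΨ' : ∀ x ∈ Icc a b, HasDerivAt Ψ' (Ψ'' x) x)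
    (hφ : ∀ x ∈ Icc a b, HasDerivAt φ (φ' x) x) (hφ' : ∀ x ∈ Icc a b, HasDerivAt φ' (φ'' x) x)
    (hΨsuper : ∀ x ∈ Icc a b, F (Ψ' x) (Ψ x) ≤ Ψ'' x)
    (hφsub : ∀ x ∈ Icc a b, φ'' x < F (φ' x) (φ x))
    (ha : φ a ≤ Ψ a) (ha' : φ' a < Ψ' a) :
    ∀ x ∈ Icc a b, φ' x < Ψ' x := by
  intro x hx
  by_contra! hle
  have hg : ∀ y ∈ Icc a b, HasDerivAt (fun y => φ' y - Ψ' y) (φ'' y - Ψ'' y) y :=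
    fun y hy => (hφ' y hy).sub (hΨ' y hy)
  obtain ⟨c, hc, hgc, hneg⟩ := exists_first_zero_of_neg_of_nonneg hx.1
    (fun y hy => (hg y (Icc_subset_Icc_right hx.2 hy)).continuousAt.continuousWithinAt)
    (sub_neg.2 ha') (sub_nonneg.2 hle)
  have hcab : Icc a c ⊆ Icc a b := Icc_subset_Icc_right (hc.2.trans hx.2)
  have hcmem : c ∈ Icc a b := hcab (right_mem_Icc.2 hc.1.le)
  have hφΨ : φ c ≤ Ψ c := by
    have hanti : AntitoneOn (fun y => φ y - Ψ y) (Icc a c) := by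
      refine antitoneOn_of_hasDerivWithinAt_nonpos (f' := fun y => φ' y - Ψ' y) (convex_Icc a c)
        (fun y hy => ((hφ y (hcab hy)).sub (hΨ y (hcab hy))).continuousAt.continuousWithinAt)
        (fun y hy => ?_) (fun y hy => ?_)
      all_goals rw [interior_Icc] at hy
      · exact ((hφ y (hcab (Ioo_subset_Icc_self hy))).sub
          (hΨ y (hcab (Ioo_subset_Icc_self hy)))).hasDerivWithinAt
      · exact (hneg y ⟨hy.1.le, hy.2⟩).le
    have := hanti (left_mem_Icc.2 hc.1.le) (right_mem_Icc.2 hc.1.le) hc.1.le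
    linarith
  have hφ'c : φ' c = Ψ' c := sub_eq_zero.1 hgc
  have hg'_nonneg : 0 ≤ φ'' c - Ψ'' c := by
    refine (hg c hcmem).nonneg_of_eventually_le_left ?_
    filter_upwards [Ioo_mem_nhdsLT hc.1] with y hy
    rw [hgc]
    exact (hneg y ⟨hy.1.le, hy.2⟩).le
  have hg'_neg : φ'' c < Ψ'' c := calc
    φ'' c < F (φ' c) (φ c) := hφsub c hcmem
    _ ≤ F (Ψ' c) (Ψ c) := hφ'c ▸ hF _ hφΨ
    _ ≤ Ψ'' c := hΨsuper c hcmem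
  linarith

theorem stmt_15_general (m σ ϱ T s s' : ℝ) (hϱ : 0 < ϱ)
    (hss : s < s')
    (Ψ Ψ' Ψ'' φ φ' φ'' : ℝ → ℝ)
    (hΨd1 : ∀ x ∈ Set.Icc (0:ℝ) T, HasDerivAt Ψ (Ψ' x) x)
    (hΨd2 : ∀ x ∈ Set.Icc (0:ℝ) T, HasDerivAt Ψ' (Ψ'' x) x)
    (hφd1 : ∀ x ∈ Set.Icc (0:ℝ) T, HasDerivAt φ (φ' x) x)
    (hφd2 : ∀ x ∈ Set.Icc (0:ℝ) T, HasDerivAt φ' (φ'' x) x)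
    (hΨODE : ∀ x ∈ Set.Icc (0:ℝ) T,
      Ψ'' x = (2 * m / σ^2) * (Ψ' x)^2 + (2 * ϱ / σ^2) * Ψ x)
    (hΨ0 : Ψ 0 = 0) (hΨ'0 : Ψ' 0 = s')
    (hφODE : ∀ x ∈ Set.Icc (0:ℝ) T,
      φ'' x < (2 * m / σ^2) * (φ' x)^2 + (2 * ϱ / σ^2) * φ x)
    (hφ0 : φ 0 = 0) (hφ'0 : φ' 0 = s) :
    ∀ x ∈ Set.Icc (0:ℝ) T, φ' x ≤ Ψ' x := by
  have hF : ∀ p, Monotone fun y => (2 * m / σ^2) * p^2 + (2 * ϱ / σ^2) * y :=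
    fun p y z hyz => by dsimp only; gcongr
  intro x hx
  exact (deriv_lt_of_strict_subsolution hF hΨd1 hΨd2 hφd1 hφd2 (fun y hy => (hΨODE y hy).ge)
    hφODE (hφ0.trans hΨ0.symm).le (hφ'0 ▸ hΨ'0 ▸ hss) x hx).le

/-- Comparison principle: if Ψ solves Ψ'' = (2m/σ²)(Ψ')² + (2ϱ/σ²)Ψ with
Ψ(0) = 0, Ψ'(0) = s̃, and φ satisfies the strict differential inequality
φ'' < (2m/σ²)(φ')² + (2ϱ/σ²)φ with φ(0) = 0, φ'(0) = s < s̃, then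
φ' ≤ Ψ' on [0,T]. -/
theorem stmt_15 (m σ ϱ T s s' : ℝ) (hm : 0 < m) (hσ : 0 < σ) (hϱ : 0 < ϱ)
    (hT : 0 < T) (hss : s < s')
    (Ψ Ψ' Ψ'' φ φ' φ'' : ℝ → ℝ)
    (hΨd1 : ∀ x ∈ Set.Icc (0:ℝ) T, HasDerivAt Ψ (Ψ' x) x)
    (hΨd2 : ∀ x ∈ Set.Icc (0:ℝ) T, HasDerivAt Ψ' (Ψ'' x) x)
    (hΨc : ContinuousOn Ψ'' (Set.Icc (0:ℝ) T))
    (hφd1 : ∀ x ∈ Set.Icc (0:ℝ) T, HasDerivAt φ (φ' x) x)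
    (hφd2 : ∀ x ∈ Set.Icc (0:ℝ) T, HasDerivAt φ' (φ'' x) x)
    (hφc : ContinuousOn φ'' (Set.Icc (0:ℝ) T))
    (hΨODE : ∀ x ∈ Set.Icc (0:ℝ) T,
      Ψ'' x = (2 * m / σ^2) * (Ψ' x)^2 + (2 * ϱ / σ^2) * Ψ x)
    (hΨ0 : Ψ 0 = 0) (hΨ'0 : Ψ' 0 = s')
    (hφODE : ∀ x ∈ Set.Icc (0:ℝ) T,
      φ'' x < (2 * m / σ^2) * (φ' x)^2 + (2 * ϱ / σ^2) * φ x)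
    (hφ0 : φ 0 = 0) (hφ'0 : φ' 0 = s) :
    ∀ x ∈ Set.Icc (0:ℝ) T, φ' x ≤ Ψ' x :=
  stmt_15_general m σ ϱ T s s' hϱ hss Ψ Ψ' Ψ'' φ φ' φ'' hΨd1 hΨd2 hφd1 hφd2 hΨODE hΨ0 hΨ'0 hφODE hφ0
    hφ'0
end

section
/- Let V₁, V₂ : [0,∞) → ℝ and β₁, β₂ ≥ 0 be such that for i = 1,2: Vᵢ is C², Vᵢ(0) = 0, Vᵢ' ≥ 1 everywhere, Vᵢ'(x) = 1 for x ≥ βᵢ, and on [0, βᵢ], Vᵢ''(x) = κ(Vᵢ'(x))² − (2m/σ²)Vᵢ'(x) + (2/σ²)(ϱVᵢ(x) − f(x)). Suppose moreover V₁ = V₂ on all of [0,∞) and the ODE holds for V₁ on an interval [β₁, β̂₁] with β̂₁ > β₁ on which also V₁' ≡ 1. If f is Lipschitz with constant ϱ − δ for δ > 0, then β̂₁ = β₁; i.e., the set where both the ODE and V' = 1 hold simultaneously cannot contain a nondegenerate interval. -/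
/-- Uniqueness of the optimal threshold: the set where both the ODE
V'' = κ(V')² − (2m/σ²)V' + (2/σ²)(ϱV − f) and V' ≡ 1 hold simultaneously cannot
contain a nondegenerate interval, when f is Lipschitz with constant ϱ − δ < ϱ.
Hence β̂₁ = β₁. -/
theorem stmt_16 (m σ ϱ δ κ : ℝ) (hm : 0 < m) (hσ : 0 < σ) (hϱ : 0 < ϱ)
    (hδ0 : 0 < δ) (hδϱ : δ < ϱ) (hκ : 0 ≤ κ)
    (f : ℝ → ℝ) (hf : ∀ x y, x ∈ Set.Ici (0:ℝ) → y ∈ Set.Ici (0:ℝ) →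
      |f x - f y| ≤ (ϱ - δ) * |x - y|)
    (V₁ V₁' V₁'' V₂ V₂' V₂'' : ℝ → ℝ) (β₁ β₂ βhat₁ : ℝ)
    (hβ₁ : 0 ≤ β₁) (hβ₂ : 0 ≤ β₂)
    -- V₁ and V₂ are C² with the stated structure
    (hd1₁ : ∀ x ∈ Set.Ici (0:ℝ), HasDerivAt V₁ (V₁' x) x)
    (hd2₁ : ∀ x ∈ Set.Ici (0:ℝ), HasDerivAt V₁' (V₁'' x) x)
    (hd1₂ : ∀ x ∈ Set.Ici (0:ℝ), HasDerivAt V₂ (V₂' x) x)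
    (hd2₂ : ∀ x ∈ Set.Ici (0:ℝ), HasDerivAt V₂' (V₂'' x) x)
    (hV₁0 : V₁ 0 = 0) (hV₂0 : V₂ 0 = 0)
    (hV₁'ge : ∀ x ∈ Set.Ici (0:ℝ), 1 ≤ V₁' x)
    (hV₂'ge : ∀ x ∈ Set.Ici (0:ℝ), 1 ≤ V₂' x)
    (hV₁'one : ∀ x ≥ β₁, V₁' x = 1)
    (hV₂'one : ∀ x ≥ β₂, V₂' x = 1)
    (hODE₁ : ∀ x ∈ Set.Icc (0:ℝ) β₁,
      V₁'' x = κ * (V₁' x)^2 - (2 * m / σ^2) * V₁' x + (2 / σ^2) * (ϱ * V₁ x - f x))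
    (hODE₂ : ∀ x ∈ Set.Icc (0:ℝ) β₂,
      V₂'' x = κ * (V₂' x)^2 - (2 * m / σ^2) * V₂' x + (2 / σ^2) * (ϱ * V₂ x - f x))
    (hVeq : ∀ x ∈ Set.Ici (0:ℝ), V₁ x = V₂ x)
    (hββ : β₁ ≤ βhat₁)
    -- on [β₁, β̂₁] both the ODE and V₁' = 1 hold
    (hODEhat : ∀ x ∈ Set.Icc β₁ βhat₁,
      V₁'' x = κ * (V₁' x)^2 - (2 * m / σ^2) * V₁' x + (2 / σ^2) * (ϱ * V₁ x - f x))
    (hone : ∀ x ∈ Set.Icc β₁ βhat₁, V₁' x = 1) :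
    βhat₁ = β₁ := by
  by_contra hne
  have hlt : β₁ < βhat₁ := lt_of_le_of_ne hββ (Ne.symm hne)
  have hσ2 : (σ:ℝ)^2 ≠ 0 := pow_ne_zero 2 (ne_of_gt hσ)
  set x := β₁ + (βhat₁ - β₁)/4 with hxdef
  set y := β₁ + 3*(βhat₁ - β₁)/4 with hydef
  have hax : β₁ < x := by rw [hxdef]; linarith
  have hxy : x < y := by rw [hxdef, hydef]; linarith
  have hyb : y < βhat₁ := by rw [hydef]; linarith
  have hx0 : (0:ℝ) ≤ x := le_trans hβ₁ hax.le
  have hy0 : (0:ℝ) ≤ y := le_trans hx0 hxy.le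
  -- On (β₁, βhat₁), f t = ϱ V₁ t + σ²κ/2 − m
  have hft : ∀ t ∈ Set.Ioo β₁ βhat₁, f t = ϱ * V₁ t + σ^2*κ/2 - m := by
    intro t ht
    have ht0 : (0:ℝ) ≤ t := le_trans hβ₁ ht.1.le
    have hev : V₁' =ᶠ[nhds t] fun _ => (1:ℝ) := by
      filter_upwards [Ioi_mem_nhds ht.1] with s hs
      exact hV₁'one s hs.le
    have hd0 : HasDerivAt V₁' 0 t :=
      (hasDerivAt_const t (1:ℝ)).congr_of_eventuallyEq hev
    have h0 : V₁'' t = 0 := (hd2₁ t ht0).unique hd0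
    have heq := hODEhat t ⟨ht.1.le, ht.2.le⟩
    rw [h0, hV₁'one t ht.1.le] at heq
    field_simp at heq
    nlinarith [sq_nonneg σ]
  -- V₁ y − V₁ x = y − x
  have hVdiff : V₁ y - V₁ x = y - x := by
    have hconst : ∀ t ∈ Set.Icc x y, (fun s => V₁ s - s) t = (fun s => V₁ s - s) x := by
      apply constant_of_has_deriv_right_zero
      · intro t ht
        have ht0 : (0:ℝ) ≤ t := le_trans hx0 ht.1
        exact ((hd1₁ t ht0).sub (hasDerivAt_id t)).continuousAt.continuousWithinAt
      · intro t ht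
        have ht0 : (0:ℝ) ≤ t := le_trans hx0 ht.1
        have hβt : β₁ ≤ t := le_trans hax.le ht.1
        have : HasDerivAt (fun s => V₁ s - s) (V₁' t - 1) t :=
          (hd1₁ t ht0).sub (hasDerivAt_id t)
        rw [hV₁'one t hβt] at this
        simpa using this.hasDerivWithinAt
    have := hconst y ⟨hxy.le, le_refl y⟩
    simp only at this
    linarith
  have hfx := hft x ⟨hax, lt_trans hxy hyb⟩
  have hfy := hft y ⟨lt_trans hax hxy, hyb⟩
  have hfdiff : f y - f x = ϱ * (y - x) := by
    rw [hfx, hfy]; linear_combination ϱ * hVdiff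
  have hbound := hf x y hx0 hy0
  rw [abs_sub_comm, hfdiff, abs_of_nonneg (by nlinarith : (0:ℝ) ≤ ϱ * (y - x)),
    abs_sub_comm, abs_of_nonneg (by linarith : (0:ℝ) ≤ y - x)] at hbound
  nlinarith
end
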